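/- arXiv:1803.08975 — 5 statements merged into one kernel-verified Lean document; each statement's English description precedes it below -/
import Mathlib

section
/- For all x, y ∈ X^u(P): x ∼_s y if and only if there exists k ∈ ℕ such that g^k(x_0) = g^k(y_0). -/
open Filter Topology

variable {Y : Type*} [MetricSpace Y]

/-- The inverse limit (solenoid) space of a map `g : Y → Y`. -/
abbrev Solenoid (g : Y → Y) : Type _ := {x : ℕ → Y // ∀ n, g (x (n + 1)) = x n}

namespace Solenoid

variable {g : Y → Y}

/-- The map `φ(x₀, x₁, …) = (g x₀, x₀, x₁, …)`. -/
def phi (x : Solenoid g) : Solenoid g :=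
  ⟨fun n => Nat.casesOn n (g (x.1 0)) fun k => x.1 k, by
    intro n
    cases n with
    | zero => rfl
    | succ k => exact x.2 k⟩

/-- The left shift, the inverse of `phi`. -/
def shift (x : Solenoid g) : Solenoid g :=
  ⟨fun n => x.1 (n + 1), fun n => x.2 (n + 1)⟩

/-- `d'_X(x, y) = sup_n γ^n d_Y(x_n, y_n)`. -/
noncomputable def dX' (γ : ℝ) (x y : Solenoid g) : ℝ :=
  ⨆ n : ℕ, γ ^ n * dist (x.1 n) (y.1 n)

/-- `d_X(x, y) = Σ_{i=0}^{K} γ^i d'_X(φ^i x, φ^i y)`. -/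
noncomputable def dX (γ : ℝ) (K : ℕ) (x y : Solenoid g) : ℝ :=
  ∑ i ∈ Finset.range (K + 1), γ ^ i * dX' γ (phi^[i] x) (phi^[i] y)

/-- The local unstable set `X^u(x, ε)`. -/
def locUnstable (γ : ℝ) (K : ℕ) (x : Solenoid g) (ε : ℝ) : Set (Solenoid g) :=
  {y | (∀ n, dist (x.1 n) (y.1 n) < ε) ∧ dX γ K x y ≤ ε}

/-- Stable equivalence `x ∼ₛ y`. -/
def stableEquiv (γ : ℝ) (K : ℕ) (x y : Solenoid g) : Prop :=
  Tendsto (fun n => dX γ K (phi^[n] x) (phi^[n] y)) atTop (𝓝 0)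

/-- Unstable equivalence `x ∼ᵤ y`. -/
def unstableEquiv (γ : ℝ) (K : ℕ) (x y : Solenoid g) : Prop :=
  Tendsto (fun n => dX γ K (shift^[n] x) (shift^[n] y)) atTop (𝓝 0)

/-- `X^u(P)`, the union of the unstable equivalence classes of points of `P`. -/
def XuP (γ : ℝ) (K : ℕ) (P : Set (Solenoid g)) : Set (Solenoid g) :=
  {x | ∃ p ∈ P, unstableEquiv γ K x p}

/-- The relation `x ∼₀ y`. -/
def equiv0 (γ : ℝ) (K : ℕ) (εY : ℝ) (x y : Solenoid g) : Prop :=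
  x.1 0 = y.1 0 ∧
    ∃ δ, 0 < δ ∧ δ < εY ∧
      ∃ U ⊆ locUnstable γ K y εY,
        (∃ V : Set (Solenoid g), IsOpen V ∧ U = V ∩ locUnstable γ K y εY) ∧
        (fun z : Solenoid g => z.1 0) '' locUnstable γ K x δ
          = (fun z : Solenoid g => z.1 0) '' U

end Solenoid

/-!
A stable pair has `d_Y(g^n x₀, g^n y₀) → 0`, since `d_X` dominates the distance of the
0-th coordinates. Once that distance stays below `β`, Axiom 1 says that `g^K` expands it by the
factor `γ^{-K} > 1`; a bounded sequence expanded geometrically forever must vanish, so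
`g^k x₀ = g^k y₀` for some `k`. Conversely, if `g^k x₀ = g^k y₀` then `φ^n x` and `φ^n y` agree
in every coordinate `m ≤ n - k`, so `d_X(φ^n x, φ^n y) = O(γ^{n-k})`.
-/

open Metric

theorem dist_le_diam_univ {Y : Type*} [PseudoMetricSpace Y] [BoundedSpace Y] (a b : Y) :
    dist a b ≤ diam (Set.univ : Set Y) :=
  dist_le_diam_of_mem BoundedSpace.bounded_univ trivial trivial

theorem le_pow_mul_of_le_mul_shift {a : ℕ → ℝ} {c : ℝ} {m p : ℕ} (hc : 0 ≤ c)
    (h : ∀ n ≥ m, a n ≤ c * a (n + p)) (j : ℕ) : a m ≤ c ^ j * a (m + j * p) := by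
  induction j with
  | zero => simp
  | succ j ih =>
    calc a m ≤ c ^ j * a (m + j * p) := ih
      _ ≤ c ^ j * (c * a (m + j * p + p)) := by gcongr; exact h _ (Nat.le_add_right _ _)
      _ = c ^ (j + 1) * a (m + (j + 1) * p) := by ring_nf

theorem nonpos_of_le_mul_shift {a : ℕ → ℝ} {c C : ℝ} {m p : ℕ} (hc0 : 0 ≤ c) (hc1 : c < 1)
    (hC : ∀ n, a n ≤ C) (h : ∀ n ≥ m, a n ≤ c * a (n + p)) : a m ≤ 0 := by
  have hlim : Tendsto (fun j : ℕ => c ^ j * C) atTop (𝓝 0) := by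
    simpa using (tendsto_pow_atTop_nhds_zero_of_lt_one hc0 hc1).mul_const C
  exact ge_of_tendsto' hlim fun j =>
    (le_pow_mul_of_le_mul_shift hc0 h j).trans (by gcongr; exact hC _)

theorem exists_iterate_eq_of_tendsto_dist {Y : Type*} [MetricSpace Y] [BoundedSpace Y]
    {g : Y → Y} {β γ : ℝ} {K : ℕ} (hβ : 0 < β) (hK : 1 ≤ K) (hγ0 : 0 ≤ γ) (hγ1 : γ < 1)
    (hax1 : ∀ x y : Y, dist x y ≤ β →
      dist (g^[K] x) (g^[K] y) ≤ γ ^ K * dist (g^[2 * K] x) (g^[2 * K] y))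
    {a b : Y} (h : Tendsto (fun n => dist (g^[n] a) (g^[n] b)) atTop (𝓝 0)) :
    ∃ k, g^[k] a = g^[k] b := by
  obtain ⟨N, hN⟩ := eventually_atTop.1 (h.eventually (ge_mem_nhds hβ))
  have hexpand : ∀ n ≥ N + K,
      dist (g^[n] a) (g^[n] b) ≤ γ ^ K * dist (g^[n + K] a) (g^[n + K] b) := by
    intro n hn
    obtain ⟨m, rfl⟩ : ∃ m, n = m + K := ⟨n - K, by omega⟩
    have := hax1 (g^[m] a) (g^[m] b) (hN m (by omega))
    simp only [← Function.iterate_add_apply] at this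
    rwa [Nat.add_comm K m, show 2 * K + m = m + K + K by ring] at this
  exact ⟨N + K, dist_le_zero.1 <|
    nonpos_of_le_mul_shift (a := fun n => dist (g^[n] a) (g^[n] b)) (pow_nonneg hγ0 K)
      (pow_lt_one₀ hγ0 hγ1 (by omega)) (fun _ => dist_le_diam_univ _ _) hexpand⟩

namespace Solenoid

variable {Y : Type*} {g : Y → Y}

theorem phi_iterate_apply_of_le (x : Solenoid g) {n m : ℕ} (hm : m ≤ n) :
    (phi^[n] x).1 m = g^[n - m] (x.1 0) := by
  induction n generalizing m with
  | zero => obtain rfl := Nat.le_zero.1 hm; rfl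
  | succ n ih =>
    rw [Function.iterate_succ_apply']
    cases m with
    | zero =>
      change g ((phi^[n] x).1 0) = g^[n + 1] (x.1 0)
      rw [ih n.zero_le, Function.iterate_succ_apply']
      rfl
    | succ m =>
      change (phi^[n] x).1 m = g^[n + 1 - (m + 1)] (x.1 0)
      rw [ih (by omega), Nat.add_sub_add_right]

theorem phi_iterate_apply_zero (x : Solenoid g) (n : ℕ) :
    (phi^[n] x).1 0 = g^[n] (x.1 0) :=
  phi_iterate_apply_of_le x n.zero_le

variable [MetricSpace Y]

theorem dX'_nonneg {γ : ℝ} (hγ : 0 ≤ γ) (x y : Solenoid g) : 0 ≤ dX' γ x y :=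
  Real.iSup_nonneg fun n => mul_nonneg (pow_nonneg hγ n) dist_nonneg

theorem dX_nonneg {γ : ℝ} (hγ : 0 ≤ γ) (K : ℕ) (x y : Solenoid g) : 0 ≤ dX γ K x y :=
  Finset.sum_nonneg fun i _ => mul_nonneg (pow_nonneg hγ i) (dX'_nonneg hγ _ _)

theorem dX_le_of_forall_dX'_le {γ c : ℝ} (hγ0 : 0 ≤ γ) (hγ1 : γ ≤ 1) {K : ℕ} {x y : Solenoid g}
    (h : ∀ i ≤ K, dX' γ (phi^[i] x) (phi^[i] y) ≤ c) : dX γ K x y ≤ (K + 1) * c := by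
  calc dX γ K x y ≤ ∑ _i ∈ Finset.range (K + 1), c :=
        Finset.sum_le_sum fun i hi =>
          (mul_le_of_le_one_left (dX'_nonneg hγ0 _ _) (pow_le_one₀ hγ0 hγ1)).trans
            (h i (Finset.mem_range_succ_iff.1 hi))
    _ = (K + 1) * c := by simp

section Bounded

variable [BoundedSpace Y] {γ : ℝ}

theorem bddAbove_weighted_dist (hγ0 : 0 ≤ γ) (hγ1 : γ ≤ 1) (x y : Solenoid g) :
    BddAbove (Set.range fun n => γ ^ n * dist (x.1 n) (y.1 n)) :=
  ⟨diam (Set.univ : Set Y), by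
    rintro _ ⟨n, rfl⟩
    exact (mul_le_of_le_one_left dist_nonneg (pow_le_one₀ hγ0 hγ1)).trans
      (dist_le_diam_univ _ _)⟩

theorem dist_zero_le_dX (hγ0 : 0 ≤ γ) (hγ1 : γ ≤ 1) (K : ℕ) (x y : Solenoid g) :
    dist (x.1 0) (y.1 0) ≤ dX γ K x y := by
  have hdX' : dist (x.1 0) (y.1 0) ≤ dX' γ x y := by
    simpa [dX'] using le_ciSup (bddAbove_weighted_dist hγ0 hγ1 x y) 0
  refine hdX'.trans ?_
  simpa [dX] using Finset.single_le_sum (f := fun i => γ ^ i * dX' γ (phi^[i] x) (phi^[i] y))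
    (fun i _ => mul_nonneg (pow_nonneg hγ0 i) (dX'_nonneg hγ0 _ _))
    (Finset.mem_range.2 K.succ_pos)

theorem tendsto_dist_iterate_of_stableEquiv (hγ0 : 0 ≤ γ) (hγ1 : γ ≤ 1) {K : ℕ}
    {x y : Solenoid g} (h : stableEquiv γ K x y) :
    Tendsto (fun n => dist (g^[n] (x.1 0)) (g^[n] (y.1 0))) atTop (𝓝 0) :=
  squeeze_zero (fun _ => dist_nonneg) (fun n => by
    simpa only [phi_iterate_apply_zero] using dist_zero_le_dX hγ0 hγ1 K (phi^[n] x) (phi^[n] y)) h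

theorem dX'_phi_iterate_le (hγ0 : 0 ≤ γ) (hγ1 : γ ≤ 1) {x y : Solenoid g} {k : ℕ}
    (hk : g^[k] (x.1 0) = g^[k] (y.1 0)) (n : ℕ) :
    dX' γ (phi^[n] x) (phi^[n] y) ≤ γ ^ (n - k) * diam (Set.univ : Set Y) := by
  refine ciSup_le fun m => ?_
  by_cases hm : m + k ≤ n
  · have hcoord : (phi^[n] x).1 m = (phi^[n] y).1 m := by
      rw [phi_iterate_apply_of_le x (by omega), phi_iterate_apply_of_le y (by omega),
        show n - m = n - m - k + k by omega, Function.iterate_add_apply,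
        Function.iterate_add_apply, hk]
    rw [hcoord, dist_self, mul_zero]
    exact mul_nonneg (pow_nonneg hγ0 _) diam_nonneg
  · exact mul_le_mul (pow_le_pow_of_le_one hγ0 hγ1 (by omega)) (dist_le_diam_univ _ _)
      dist_nonneg (pow_nonneg hγ0 _)

theorem stableEquiv_of_iterate_eq (hγ0 : 0 ≤ γ) (hγ1 : γ < 1) {K : ℕ} {x y : Solenoid g}
    {k : ℕ} (hk : g^[k] (x.1 0) = g^[k] (y.1 0)) : stableEquiv γ K x y := by
  set D := diam (Set.univ : Set Y)
  have hbound : ∀ n, dX γ K (phi^[n] x) (phi^[n] y) ≤ (K + 1) * (γ ^ (n - k) * D) := by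
    intro n
    refine dX_le_of_forall_dX'_le hγ0 hγ1.le fun i _ => ?_
    simp only [← Function.iterate_add_apply]
    exact (dX'_phi_iterate_le hγ0 hγ1.le hk (i + n)).trans <|
      mul_le_mul_of_nonneg_right (pow_le_pow_of_le_one hγ0 hγ1.le (by omega)) diam_nonneg
  have hlim : Tendsto (fun n : ℕ => (K + 1) * (γ ^ (n - k) * D)) atTop (𝓝 0) := by
    simpa using (((tendsto_pow_atTop_nhds_zero_of_lt_one hγ0 hγ1).comp
      (tendsto_sub_atTop_nat k)).mul_const D).const_mul ((K : ℝ) + 1)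
  exact squeeze_zero (fun _ => dX_nonneg hγ0 K _ _) hbound hlim

end Bounded

end Solenoid

theorem stable_iff_eventually_equal_general
    {Y : Type*} [MetricSpace Y] [CompactSpace Y]
    (g : Y → Y)
    (β γ : ℝ) (K : ℕ) (hβ : 0 < β) (hK : 1 ≤ K) (hγ0 : 0 < γ) (hγ1 : γ < 1)
    (hax1 : ∀ x y : Y, dist x y ≤ β →
      dist (g^[K] x) (g^[K] y) ≤ γ ^ K * dist (g^[2 * K] x) (g^[2 * K] y))
    (x : Solenoid g)
    (y : Solenoid g) :
    Solenoid.stableEquiv γ K x y ↔ ∃ k : ℕ, g^[k] (x.1 0) = g^[k] (y.1 0) := by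
  constructor
  · intro hstable
    exact exists_iterate_eq_of_tendsto_dist hβ hK hγ0.le hγ1 hax1
      (Solenoid.tendsto_dist_iterate_of_stableEquiv hγ0.le hγ1.le hstable)
  · rintro ⟨k, hk⟩
    exact Solenoid.stableEquiv_of_iterate_eq hγ0.le hγ1 hk

theorem stable_iff_eventually_equal
    {Y : Type*} [MetricSpace Y] [CompactSpace Y]
    (g : Y → Y) (hgc : Continuous g) (hgs : Function.Surjective g)
    (β γ : ℝ) (K : ℕ) (hβ : 0 < β) (hK : 1 ≤ K) (hγ0 : 0 < γ) (hγ1 : γ < 1)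
    (hax1 : ∀ x y : Y, dist x y ≤ β →
      dist (g^[K] x) (g^[K] y) ≤ γ ^ K * dist (g^[2 * K] x) (g^[2 * K] y))
    (hax2 : ∀ (x : Y) (ε : ℝ), 0 < ε → ε ≤ β →
      g^[K] '' Metric.ball (g^[K] x) ε ⊆ g^[2 * K] '' Metric.ball x (γ * ε))
    (P : Set (Solenoid g)) (hPfin : P.Finite) (hPinv : Solenoid.phi '' P = P)
    (x : Solenoid g) (hx : x ∈ Solenoid.XuP γ K P)
    (y : Solenoid g) (hy : y ∈ Solenoid.XuP γ K P) :
    Solenoid.stableEquiv γ K x y ↔ ∃ k : ℕ, g^[k] (x.1 0) = g^[k] (y.1 0) :=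
  stable_iff_eventually_equal_general g β γ K hβ hK hγ0 hγ1 hax1 x y
end

section
/- For every compact subset K ⊆ X there exists N ∈ ℕ such that for every x ∈ X, the set {x' ∈ K : q(x') = q(x)} has at most N elements. -/
/-!
Cover the compact set `K` by finitely many open sets on which `q` is injective. Each of them
meets a fibre of `q` in at most one point, so the number of sets bounds every fibre in `K`.
-/

open Set Topology

theorem Set.injOn_of_coe_comp_injective {α β : Type*} {f : α → β} {s : Set α} {t : Set β}
    (e : s → t) (he : Function.Injective e) (hef : ∀ x, (e x : β) = f x) : InjOn f s := by
  rw [injOn_iff_injective]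
  convert Subtype.val_injective.comp he
  exact funext fun x => (hef x).symm

theorem Set.InjOn.encard_inter_preimage_singleton_le_one {α β : Type*} {f : α → β} {s : Set α}
    (hf : InjOn f s) (b : β) : (s ∩ f ⁻¹' {b}).encard ≤ 1 :=
  encard_le_one_iff_subsingleton.2 fun _ hx _ hy => hf hx.1 hy.1 (hx.2.trans hy.2.symm)

theorem Set.encard_inter_preimage_singleton_le_card_of_subset_biUnion {α β ι : Type*}
    {f : α → β} {s : Set α} {U : ι → Set α} {t : Finset ι} (hs : s ⊆ ⋃ i ∈ t, U i)
    (hU : ∀ i ∈ t, InjOn f (U i)) (b : β) : (s ∩ f ⁻¹' {b}).encard ≤ t.card :=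
  calc (s ∩ f ⁻¹' {b}).encard
      ≤ (⋃ i ∈ t, U i ∩ f ⁻¹' {b}).encard := by
        rw [← iUnion₂_inter]
        exact encard_le_encard (inter_subset_inter_left _ hs)
    _ ≤ ∑ i ∈ t, (U i ∩ f ⁻¹' {b}).encard := t.set_encard_biUnion_le _
    _ ≤ ∑ _i ∈ t, 1 :=
        Finset.sum_le_sum fun i hi => (hU i hi).encard_inter_preimage_singleton_le_one b
    _ = t.card := by simp

theorem IsCompact.exists_encard_inter_preimage_singleton_le {X Y : Type*} [TopologicalSpace X]
    {q : X → Y} {K : Set X} (hK : IsCompact K) (hq : ∀ x ∈ K, ∃ U ∈ 𝓝 x, InjOn q U) :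
    ∃ N : ℕ, ∀ y, (K ∩ q ⁻¹' {y}).encard ≤ N := by
  choose! U hU hinj using hq
  obtain ⟨t, htK, hcover⟩ := hK.elim_nhds_subcover U hU
  exact ⟨t.card, encard_inter_preimage_singleton_le_card_of_subset_biUnion hcover
    fun i hi => hinj i (htK i hi)⟩

theorem bounded_fibers_on_compact_general
    {X : Type*} [TopologicalSpace X]
    {Y : Type*} [TopologicalSpace Y]
    (q : X → Y)
    (hq_loc : ∀ x : X, ∃ U : Set X, x ∈ U ∧ IsOpen U ∧ IsOpen (q '' U) ∧
      ∃ h : U ≃ₜ (q '' U), ∀ u : U, (h u : Y) = q u)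
    (K : Set X) (hK : IsCompact K) :
    ∃ N : ℕ, ∀ x : X,
      {x' : X | x' ∈ K ∧ q x' = q x}.Finite ∧
      {x' : X | x' ∈ K ∧ q x' = q x}.ncard ≤ N := by
  have hq_inj : ∀ x ∈ K, ∃ U ∈ 𝓝 x, InjOn q U := fun x _ => by
    obtain ⟨U, hxU, hU, -, h, hh⟩ := hq_loc x
    exact ⟨U, hU.mem_nhds hxU, injOn_of_coe_comp_injective h h.injective hh⟩
  obtain ⟨N, hN⟩ := hK.exists_encard_inter_preimage_singleton_le hq_inj
  exact ⟨N, fun x => encard_le_coe_iff_finite_ncard_le.1 (hN (q x))⟩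

theorem bounded_fibers_on_compact
    {X : Type*} [TopologicalSpace X] [SecondCountableTopology X]
    [LocallyCompactSpace X] [T2Space X]
    {Y : Type*} [TopologicalSpace Y]
    (q : X → Y) (hq_surj : Function.Surjective q)
    (hq_loc : ∀ x : X, ∃ U : Set X, x ∈ U ∧ IsOpen U ∧ IsOpen (q '' U) ∧
      ∃ h : U ≃ₜ (q '' U), ∀ u : U, (h u : Y) = q u)
    (K : Set X) (hK : IsCompact K) :
    ∃ N : ℕ, ∀ x : X,
      {x' : X | x' ∈ K ∧ q x' = q x}.Finite ∧
      {x' : X | x' ∈ K ∧ q x' = q x}.ncard ≤ N :=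
  bounded_fibers_on_compact_general q hq_loc K hK
end

section
/- For every compact subset K̂ ⊆ R(q) there exists M ∈ ℕ such that for every x ∈ X, the set {(x', x'') ∈ K̂ : q(x') = q(x)} has at most M elements. -/
/-!
Choose around every point of `K̂` a box `U × V` with `q` injective on `U` and on `V`. On such a
box inside `R(q)`, a point `(x', x'')` is determined by `q x'`: first `x' ∈ U`, then `x'' ∈ V`
because `q x'' = q x'`. Finitely many boxes cover the compact set `K̂`, and each box meets a fiber
`{(x', x'') ∈ K̂ : q x' = q x}` in at most one point, so the number of boxes bounds every fiber.
-/

open Set Filter Topology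

theorem Set.injOn_of_injective_of_coe_eq {X Y : Type*} {q : X → Y} {U : Set X} {V : Set Y}
    (e : U → V) (he : e.Injective) (hq : ∀ u, (e u : Y) = q u) : U.InjOn q := by
  have hrestrict : U.domRestrict q = Subtype.val ∘ e := funext fun u => (hq u).symm
  rw [Set.injOn_iff_injective, hrestrict]
  exact Subtype.val_injective.comp he

theorem IsLocallyInjective.exists_mem_nhds_injOn_fst_inter_pullback {X Y : Type*} [TopologicalSpace X]
    {q : X → Y} (hq : IsLocallyInjective q) (p : X × X) :
    ∃ W ∈ 𝓝 p, (W ∩ {p : X × X | q p.1 = q p.2}).InjOn (fun p => q p.1) := by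
  obtain ⟨U, hU, hqU⟩ := isLocallyInjective_iff_nhds.1 hq p.1
  obtain ⟨V, hV, hqV⟩ := isLocallyInjective_iff_nhds.1 hq p.2
  refine ⟨U ×ˢ V, prod_mem_nhds hU hV, ?_⟩
  rintro a ⟨⟨haU, haV⟩, ha⟩ b ⟨⟨hbU, hbV⟩, hb⟩ hab
  have hfst : a.1 = b.1 := hqU haU hbU hab
  have hsnd : a.2 = b.2 := hqV haV hbV (ha.symm.trans (hab.trans hb))
  exact Prod.ext hfst hsnd

theorem IsCompact.exists_ncard_fiber_le {Z W : Type*} [TopologicalSpace Z] {K : Set Z}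
    (hK : IsCompact K) (g : Z → W) (hg : ∀ z ∈ K, ∃ U ∈ 𝓝 z, (U ∩ K).InjOn g) :
    ∃ M : ℕ, ∀ w : W, {z | z ∈ K ∧ g z = w}.Finite ∧ {z | z ∈ K ∧ g z = w}.ncard ≤ M := by
  choose! U hU hinj using hg
  obtain ⟨t, htK, hcover⟩ := hK.elim_nhds_subcover U hU
  refine ⟨t.card, fun w => ?_⟩
  set F := {z | z ∈ K ∧ g z = w}
  have hsub : F ⊆ ⋃ c ∈ t, U c ∩ F := fun z hz => by
    obtain ⟨c, hc, hzc⟩ := mem_iUnion₂.1 (hcover hz.1)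
    exact mem_biUnion hc ⟨hzc, hz⟩
  have hpiece : ∀ c ∈ t, (U c ∩ F).Subsingleton := fun c hc a ha b hb =>
    hinj c (htK c hc) ⟨ha.1, ha.2.1⟩ ⟨hb.1, hb.2.1⟩ (ha.2.2.trans hb.2.2.symm)
  have hfin : (⋃ c ∈ t, U c ∩ F).Finite :=
    t.finite_toSet.biUnion fun c hc => (hpiece c hc).finite
  refine ⟨hfin.subset hsub, ?_⟩
  calc F.ncard ≤ (⋃ c ∈ t, U c ∩ F).ncard := ncard_le_ncard hsub hfin
    _ ≤ ∑ c ∈ t, (U c ∩ F).ncard := t.set_ncard_biUnion_le _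
    _ ≤ ∑ _c ∈ t, 1 := Finset.sum_le_sum fun c hc =>
        (ncard_le_one (hpiece c hc).finite).2 fun _ ha _ hb => hpiece c hc ha hb
    _ = t.card := by rw [Finset.card_eq_sum_ones]

theorem bounded_fibers_on_compact_in_Rq_general
    {X : Type*} [TopologicalSpace X]
    {Y : Type*} [TopologicalSpace Y]
    (q : X → Y)
    (hq_loc : ∀ x : X, ∃ U : Set X, x ∈ U ∧ IsOpen U ∧ IsOpen (q '' U) ∧
      ∃ h : U ≃ₜ (q '' U), ∀ u : U, (h u : Y) = q u)
    (Khat : Set (X × X)) (hKhat_sub : Khat ⊆ {p : X × X | q p.1 = q p.2})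
    (hKhat : IsCompact Khat) :
    ∃ M : ℕ, ∀ x : X,
      {p : X × X | p ∈ Khat ∧ q p.1 = q x}.Finite ∧
      {p : X × X | p ∈ Khat ∧ q p.1 = q x}.ncard ≤ M := by
  have hq : IsLocallyInjective q := fun x => by
    obtain ⟨U, hxU, hU, -, e, he⟩ := hq_loc x
    exact ⟨U, hU, hxU, injOn_of_injective_of_coe_eq e e.injective he⟩
  obtain ⟨M, hM⟩ := hKhat.exists_ncard_fiber_le (fun p => q p.1) fun p _ => by
    obtain ⟨W, hW, hinj⟩ := hq.exists_mem_nhds_injOn_fst_inter_pullback p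
    exact ⟨W, hW, hinj.mono (inter_subset_inter_right W hKhat_sub)⟩
  exact ⟨M, fun x => hM (q x)⟩

theorem bounded_fibers_on_compact_in_Rq
    {X : Type*} [TopologicalSpace X] [SecondCountableTopology X]
    [LocallyCompactSpace X] [T2Space X]
    {Y : Type*} [TopologicalSpace Y]
    (q : X → Y) (hq_surj : Function.Surjective q)
    (hq_loc : ∀ x : X, ∃ U : Set X, x ∈ U ∧ IsOpen U ∧ IsOpen (q '' U) ∧
      ∃ h : U ≃ₜ (q '' U), ∀ u : U, (h u : Y) = q u)
    (Khat : Set (X × X)) (hKhat_sub : Khat ⊆ {p : X × X | q p.1 = q p.2})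
    (hKhat : IsCompact Khat) :
    ∃ M : ℕ, ∀ x : X,
      {p : X × X | p ∈ Khat ∧ q p.1 = q x}.Finite ∧
      {p : X × X | p ∈ Khat ∧ q p.1 = q x}.ncard ≤ M :=
  bounded_fibers_on_compact_in_Rq_general q hq_loc Khat hKhat_sub hKhat
end

section
/- Let K̂ ⊆ R(q) be compact and suppose K̂ is closed under inverses and units, i.e., (x, y) ∈ K̂ implies (y, x) ∈ K̂, (x, x) ∈ K̂, and (y, y) ∈ K̂. Then the subgroupoid of R(q) generated by K̂, namely ⋃_{n≥1} K̂^n, is compact; moreover there exists M ∈ ℕ such that ⋃_{n≥1} K̂^n = ⋃_{n=1}^{M} K̂^n. -/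
/-!
The links of a chain in `K̂` start at points of the compact set `pr₁ K̂` lying in one fibre of
`q`, and `pr₁ K̂` is covered by finitely many, say `N`, open sets on which `q` is injective. A fibre therefore meets
`pr₁ K̂` in at most `N` points, so a chain with more than `N` links revisits a point and the loop
between the two visits can be cut out. Hence `K̂^n ⊆ ⋃_{m ≤ N} K̂^m` for all `n`, and the union is
a finite union of compact sets.
-/

/-- Composition of relations on `X`, viewed as subsets of `X × X`. -/
def relComp {X : Type*} (S T : Set (X × X)) : Set (X × X) :=
  {p : X × X | ∃ y : X, (p.1, y) ∈ S ∧ (y, p.2) ∈ T}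

/-- `relPow S n` is the `(n+1)`-fold composition power `S^{n+1}` of the relation `S`,
so that `relPow S 0 = S¹ = S` and `relPow S n = S^{n+1}`. -/
def relPow {X : Type*} (S : Set (X × X)) : ℕ → Set (X × X)
  | 0 => S
  | n + 1 => relComp (relPow S n) S

open Set

section RelPow

variable {X : Type*} {S : Set (X × X)}

theorem mem_relPow_iff_exists_chain {n : ℕ} {p : X × X} :
    p ∈ relPow S n ↔
      ∃ c : ℕ → X, c 0 = p.1 ∧ c (n + 1) = p.2 ∧ ∀ i ≤ n, (c i, c (i + 1)) ∈ S := by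
  induction n generalizing p with
  | zero =>
    refine ⟨fun h => ⟨fun k => if k = 0 then p.1 else p.2, rfl, rfl, ?_⟩, ?_⟩
    · intro i hi
      obtain rfl : i = 0 := Nat.le_zero.mp hi
      exact h
    · rintro ⟨c, hc0, hc1, hc⟩
      simpa [relPow, hc0, hc1] using hc 0 le_rfl
  | succ n ih =>
    constructor
    · rintro ⟨y, hy, hyS⟩
      obtain ⟨c, hc0, hc1, hc⟩ := ih.mp hy
      refine ⟨fun k => if k ≤ n + 1 then c k else p.2, by simpa using hc0, by simp, ?_⟩
      intro i hi
      rcases hi.lt_or_eq with hi | rfl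
      · simpa [show i ≤ n + 1 by omega, show i + 1 ≤ n + 1 by omega] using hc i (by omega)
      · simpa [hc1] using hyS
    · rintro ⟨c, hc0, hc1, hc⟩
      exact ⟨c (n + 1), ih.mpr ⟨c, hc0, rfl, fun i hi => hc i (by omega)⟩, hc1 ▸ hc (n + 1) le_rfl⟩

theorem mem_relPow_sub_of_chain_eq {n i j : ℕ} {p : X × X} {c : ℕ → X} (hc0 : c 0 = p.1)
    (hc1 : c (n + 1) = p.2) (hc : ∀ k ≤ n, (c k, c (k + 1)) ∈ S) (hij : i < j) (hj : j ≤ n)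
    (heq : c i = c j) : p ∈ relPow S (n - (j - i)) := by
  refine mem_relPow_iff_exists_chain.mpr
    ⟨fun k => if k ≤ i then c k else c (k + (j - i)), by simpa using hc0, ?_, ?_⟩
  · simp only [if_neg (show ¬n - (j - i) + 1 ≤ i by omega)]
    rwa [show n - (j - i) + 1 + (j - i) = n + 1 by omega]
  · intro k hk
    rcases lt_trichotomy k i with h | rfl | h
    · simpa [show k ≤ i by omega, show k + 1 ≤ i by omega] using hc k (by omega)
    · simpa [heq, show k + 1 + (j - k) = j + 1 by omega] using hc j hj
    · simpa [show ¬k ≤ i by omega, show ¬k + 1 ≤ i by omega,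
        show k + 1 + (j - i) = k + (j - i) + 1 by omega] using hc (k + (j - i)) (by omega)

variable {Y : Type*} (q : X → Y) {N : ℕ}

theorem exists_lt_of_mem_relPow_of_encard_fiber_le (hS : S ⊆ {p | q p.1 = q p.2})
    (hN : ∀ y, (Prod.fst '' S ∩ q ⁻¹' {y}).encard ≤ N) {n : ℕ} {p : X × X}
    (hp : p ∈ relPow S n) : ∃ m < N, p ∈ relPow S m := by
  induction n using Nat.strong_induction_on generalizing p with
  | _ n ih =>
  by_cases hn : n < N
  · exact ⟨n, hn, hp⟩
  obtain ⟨c, hc0, hc1, hc⟩ := mem_relPow_iff_exists_chain.mp hp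
  have hfiber : ∀ k ≤ n + 1, q (c k) = q (c 0) := by
    intro k hk
    induction k with
    | zero => rfl
    | succ k ihk => exact (hS (hc k (by omega))).symm.trans (ihk (by omega))
  have hmaps : MapsTo c {k | k < n + 1} (Prod.fst '' S ∩ q ⁻¹' {q (c 0)}) := fun k hk =>
    ⟨⟨_, hc k (Nat.lt_succ_iff.mp hk), rfl⟩, hfiber k hk.le⟩
  have hcard : (Prod.fst '' S ∩ q ⁻¹' {q (c 0)}).encard < {k | k < n + 1}.encard := by
    rw [Nat.encard_range]
    exact (hN _).trans_lt (by exact_mod_cast (by omega : N < n + 1))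
  obtain ⟨i, hi : i < n + 1, j, hj : j < n + 1, hne, heq⟩ :=
    exists_ne_map_eq_of_encard_lt_of_maps_to hcard hmaps
  rcases hne.lt_or_gt with hij | hji
  · exact ih _ (by omega) (mem_relPow_sub_of_chain_eq hc0 hc1 hc hij (by omega) heq)
  · exact ih _ (by omega) (mem_relPow_sub_of_chain_eq hc0 hc1 hc hji (by omega) heq.symm)

theorem iUnion_relPow_eq_of_encard_fiber_le (hS : S ⊆ {p | q p.1 = q p.2})
    (hN : ∀ y, (Prod.fst '' S ∩ q ⁻¹' {y}).encard ≤ N) :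
    ⋃ n, relPow S n = ⋃ n ∈ Finset.range N, relPow S n := by
  refine (iUnion_subset fun n p hp => ?_).antisymm (iUnion₂_subset fun n _ => subset_iUnion _ n)
  obtain ⟨m, hm, hpm⟩ := exists_lt_of_mem_relPow_of_encard_fiber_le q hS hN hp
  exact mem_biUnion (Finset.mem_range.mpr hm) hpm

end RelPow

theorem encard_inter_fiber_le_card {X Y ι : Type*} (q : X → Y) (t : Finset ι) {U : ι → Set X}
    (hU : ∀ i ∈ t, InjOn q (U i)) {s : Set X} (hs : s ⊆ ⋃ i ∈ t, U i) (y : Y) :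
    (s ∩ q ⁻¹' {y}).encard ≤ t.card :=
  calc (s ∩ q ⁻¹' {y}).encard
      ≤ (⋃ i ∈ t, U i ∩ q ⁻¹' {y}).encard := by
        refine encard_le_encard fun a ha => ?_
        obtain ⟨i, hi, hai⟩ := mem_iUnion₂.mp (hs ha.1)
        exact mem_biUnion hi ⟨hai, ha.2⟩
    _ ≤ ∑ i ∈ t, (U i ∩ q ⁻¹' {y}).encard := t.set_encard_biUnion_le _
    _ ≤ ∑ _i ∈ t, 1 := Finset.sum_le_sum fun i hi =>
        encard_le_one_iff.mpr fun a b ha hb => hU i hi ha.1 hb.1 (ha.2.trans hb.2.symm)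
    _ = t.card := by simp

section Topology

variable {X : Type*} [TopologicalSpace X] [T2Space X]

theorem isCompact_relComp {S T : Set (X × X)} (hS : IsCompact S) (hT : IsCompact T) :
    IsCompact (relComp S T) := by
  have h : relComp S T = (fun r : (X × X) × (X × X) => (r.1.1, r.2.2)) ''
      (S ×ˢ T ∩ {r | r.1.2 = r.2.1}) := by
    ext p
    constructor
    · rintro ⟨y, hy, hyT⟩
      exact ⟨((p.1, y), (y, p.2)), ⟨⟨hy, hyT⟩, rfl⟩, rfl⟩
    · rintro ⟨⟨⟨a, y⟩, ⟨y', b⟩⟩, ⟨⟨hy, hyT⟩, rfl : y = y'⟩, rfl⟩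
      exact ⟨y, hy, hyT⟩
  rw [h]
  exact ((hS.prod hT).inter_right (isClosed_eq (by fun_prop) (by fun_prop))).image (by fun_prop)

theorem isCompact_relPow {S : Set (X × X)} (hS : IsCompact S) (n : ℕ) :
    IsCompact (relPow S n) := by
  induction n with
  | zero => exact hS
  | succ n ih => exact isCompact_relComp ih hS

end Topology

theorem subgroupoid_generated_by_compact_is_compact_general
    {X : Type*} [TopologicalSpace X] [T2Space X]
    {Y : Type*} [TopologicalSpace Y]
    (q : X → Y)
    (hq_loc : ∀ x : X, ∃ U : Set X, x ∈ U ∧ IsOpen U ∧ IsOpen (q '' U) ∧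
      ∃ h : U ≃ₜ (q '' U), ∀ u : U, (h u : Y) = q u)
    (Khat : Set (X × X)) (hKhat_sub : Khat ⊆ {p : X × X | q p.1 = q p.2})
    (hKhat : IsCompact Khat) :
    IsCompact (⋃ n : ℕ, relPow Khat n) ∧
      ∃ M : ℕ, (⋃ n : ℕ, relPow Khat n) = ⋃ n ∈ Finset.range M, relPow Khat n := by
  have hinj : ∀ x, ∃ U : Set X, x ∈ U ∧ IsOpen U ∧ InjOn q U := fun x => by
    obtain ⟨U, hxU, hU, -, h, hh⟩ := hq_loc x
    refine ⟨U, hxU, hU, fun a ha b hb hab => ?_⟩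
    have : h ⟨a, ha⟩ = h ⟨b, hb⟩ := Subtype.ext (by rw [hh, hh]; exact hab)
    exact congrArg Subtype.val (h.injective this)
  choose U hxU hUopen hUinj using hinj
  obtain ⟨t, ht⟩ := (hKhat.image continuous_fst).elim_finite_subcover U hUopen
    fun x _ => mem_iUnion.mpr ⟨x, hxU x⟩
  have hunion := iUnion_relPow_eq_of_encard_fiber_le q hKhat_sub
    (encard_inter_fiber_le_card q t (fun i _ => hUinj i) ht)
  exact ⟨hunion ▸ (Finset.range _).isCompact_biUnion fun n _ => isCompact_relPow hKhat n, _, hunion⟩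

theorem subgroupoid_generated_by_compact_is_compact
    {X : Type*} [TopologicalSpace X] [SecondCountableTopology X]
    [LocallyCompactSpace X] [T2Space X]
    {Y : Type*} [TopologicalSpace Y]
    (q : X → Y) (hq_surj : Function.Surjective q)
    (hq_loc : ∀ x : X, ∃ U : Set X, x ∈ U ∧ IsOpen U ∧ IsOpen (q '' U) ∧
      ∃ h : U ≃ₜ (q '' U), ∀ u : U, (h u : Y) = q u)
    (Khat : Set (X × X)) (hKhat_sub : Khat ⊆ {p : X × X | q p.1 = q p.2})
    (hKhat : IsCompact Khat)
    (hinv : ∀ p ∈ Khat, (p.2, p.1) ∈ Khat)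
    (hunit : ∀ p ∈ Khat, (p.1, p.1) ∈ Khat ∧ (p.2, p.2) ∈ Khat) :
    IsCompact (⋃ n : ℕ, relPow Khat n) ∧
      ∃ M : ℕ, (⋃ n : ℕ, relPow Khat n) = ⋃ n ∈ Finset.range M, relPow Khat n :=
  subgroupoid_generated_by_compact_is_compact_general q hq_loc Khat hKhat_sub hKhat
end

section
/- If Y is infinite, then g is not injective; in particular, g is not a homeomorphism. -/
open Filter Topology

variable {Y : Type*} [MetricSpace Y]

/-
If `g` were injective it would be a homeomorphism of the compact space `Y`, and Axiom 1 read
through `g⁻¹` says that `q = g^{-K}` contracts distances below some `δ > 0` by the factor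
`γ^K < 1`. Cover `Y` by `N` balls of radius `δ`; since `q` is onto, their images under `q^n`
cover `Y` by `N` sets of diameter at most `2 γ^{nK} δ`. Two distinct points are separated by
these covers once `n` is large, so `Y` has at most `N` points.
-/

def IsLocalContraction (q : Y → Y) (c δ : ℝ) : Prop :=
  ∀ a b, dist a b < δ → dist (q a) (q b) ≤ c * dist a b

theorem IsLocalContraction.dist_iterate_le {q : Y → Y} {c δ : ℝ}
    (hq : IsLocalContraction q c δ) (hc0 : 0 ≤ c) (hc1 : c ≤ 1) (n : ℕ) {a b : Y}
    (hab : dist a b < δ) : dist (q^[n] a) (q^[n] b) ≤ c ^ n * dist a b := by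
  induction n generalizing a b with
  | zero => simp
  | succ n ih =>
    have hstep := hq a b hab
    have hclose : dist (q a) (q b) < δ :=
      hstep.trans_lt ((mul_le_of_le_one_left dist_nonneg hc1).trans_lt hab)
    calc dist (q^[n + 1] a) (q^[n + 1] b) = dist (q^[n] (q a)) (q^[n] (q b)) := rfl
      _ ≤ c ^ n * dist (q a) (q b) := ih hclose
      _ ≤ c ^ n * (c * dist a b) := by gcongr
      _ = c ^ (n + 1) * dist a b := by ring

theorem finite_of_uniformly_bounded_nets {N : ℕ}
    (h : ∀ ε > 0, ∃ T : Finset Y, T.card ≤ N ∧ ∀ y, ∃ t ∈ T, dist y t < ε) : Finite Y := by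
  by_contra hfin
  have : Infinite Y := not_finite_iff_infinite.mp hfin
  obtain ⟨s, hs⟩ := Infinite.exists_subset_card_eq Y (N + 2)
  have hsep : 0 < (s : Set Y).infsep :=
    s.infsep_pos_iff_nontrivial.mpr (Finset.one_lt_card_iff_nontrivial.mp (by omega))
  obtain ⟨T, hTcard, hT⟩ := h _ (half_pos hsep)
  choose center hcenter_mem hcenter_dist using hT
  obtain ⟨x, hx, y, hy, hxy, hcenter⟩ :=
    Finset.exists_ne_map_eq_of_card_lt_of_maps_to (by omega : T.card < s.card)
      (f := center) fun a _ => hcenter_mem a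
  have hclose : dist x y < (s : Set Y).infsep := by
    calc dist x y ≤ dist x (center x) + dist y (center y) := by
          rw [hcenter, dist_comm y]; exact dist_triangle _ _ _
      _ < (s : Set Y).infsep / 2 + (s : Set Y).infsep / 2 :=
          add_lt_add (hcenter_dist x) (hcenter_dist y)
      _ = (s : Set Y).infsep := add_halves _
  exact (Set.infsep_le_dist_of_mem hx hy hxy).not_gt hclose

theorem finite_of_surjective_of_isLocalContraction [CompactSpace Y] {q : Y → Y} {c δ : ℝ}
    (hsurj : Function.Surjective q) (hq : IsLocalContraction q c δ) (hc0 : 0 ≤ c)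
    (hc1 : c < 1) (hδ : 0 < δ) : Finite Y := by
  classical
  obtain ⟨T, -, hT⟩ :=
    isCompact_univ.elim_nhds_subcover (fun y : Y => Metric.ball y δ) fun y _ =>
      Metric.ball_mem_nhds y hδ
  refine finite_of_uniformly_bounded_nets (N := T.card) fun ε hε => ?_
  obtain ⟨n, hn⟩ := exists_pow_lt_of_lt_one (div_pos hε hδ) hc1
  refine ⟨T.image (q^[n]), Finset.card_image_le, fun y => ?_⟩
  obtain ⟨z, rfl⟩ := (hsurj.iterate n) y
  obtain ⟨t, ht, hzt⟩ := Set.mem_iUnion₂.mp (hT (Set.mem_univ z))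
  refine ⟨q^[n] t, Finset.mem_image_of_mem _ ht, ?_⟩
  calc dist (q^[n] z) (q^[n] t) ≤ c ^ n * dist z t := hq.dist_iterate_le hc0 hc1.le n hzt
    _ ≤ c ^ n * δ := by gcongr; exact (Metric.mem_ball.mp hzt).le
    _ < ε := (lt_div_iff₀ hδ).mp hn

theorem exists_isLocalContraction_iterate_of_leftInverse [CompactSpace Y] {g f : Y → Y}
    (hf : Continuous f) (hfg : Function.LeftInverse g f) {β γ : ℝ} {K : ℕ} (hβ : 0 < β)
    (hax1 : ∀ x y : Y, dist x y ≤ β →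
      dist (g^[K] x) (g^[K] y) ≤ γ ^ K * dist (g^[2 * K] x) (g^[2 * K] y)) :
    ∃ δ > 0, IsLocalContraction (f^[K]) (γ ^ K) δ := by
  obtain ⟨δ, hδ, hclose⟩ := Metric.uniformContinuous_iff.mp
    (CompactSpace.uniformContinuous_of_continuous (hf.iterate (2 * K))) β hβ
  refine ⟨δ, hδ, fun a b hab => ?_⟩
  have hg2K (c : Y) : g^[2 * K] (f^[2 * K] c) = c := hfg.iterate (2 * K) c
  have hgK (c : Y) : g^[K] (f^[2 * K] c) = f^[K] c := by
    rw [two_mul, Function.iterate_add_apply, hfg.iterate K]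
  simpa only [hg2K, hgK] using hax1 _ _ (hclose hab).le

theorem not_injective_of_infinite_general
    {Y : Type*} [MetricSpace Y] [CompactSpace Y]
    (g : Y → Y) (hgc : Continuous g) (hgs : Function.Surjective g)
    (β γ : ℝ) (K : ℕ) (hβ : 0 < β) (hK : 1 ≤ K) (hγ0 : 0 < γ) (hγ1 : γ < 1)
    (hax1 : ∀ x y : Y, dist x y ≤ β →
      dist (g^[K] x) (g^[K] y) ≤ γ ^ K * dist (g^[2 * K] x) (g^[2 * K] y))
    [Infinite Y] :
    ¬ Function.Injective g ∧ ∀ h : Y ≃ₜ Y, ⇑h ≠ g := by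
  have hinj : ¬ Function.Injective g := by
    intro hginj
    let G : Y ≃ₜ Y := hgc.homeoOfEquivCompactToT2 (f := Equiv.ofBijective g ⟨hginj, hgs⟩)
    obtain ⟨δ, hδ, hcontr⟩ :=
      exists_isLocalContraction_iterate_of_leftInverse G.symm.continuous G.apply_symm_apply hβ hax1
    have : Finite Y := finite_of_surjective_of_isLocalContraction
      (G.symm.surjective.iterate K) hcontr (pow_nonneg hγ0.le K)
      (pow_lt_one₀ hγ0.le hγ1 (by omega)) hδ
    exact not_finite Y
  exact ⟨hinj, fun h hgh => hinj (hgh ▸ h.injective)⟩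

theorem not_injective_of_infinite
    {Y : Type*} [MetricSpace Y] [CompactSpace Y]
    (g : Y → Y) (hgc : Continuous g) (hgs : Function.Surjective g)
    (β γ : ℝ) (K : ℕ) (hβ : 0 < β) (hK : 1 ≤ K) (hγ0 : 0 < γ) (hγ1 : γ < 1)
    (hax1 : ∀ x y : Y, dist x y ≤ β →
      dist (g^[K] x) (g^[K] y) ≤ γ ^ K * dist (g^[2 * K] x) (g^[2 * K] y))
    (hax2 : ∀ (x : Y) (ε : ℝ), 0 < ε → ε ≤ β →
      g^[K] '' Metric.ball (g^[K] x) ε ⊆ g^[2 * K] '' Metric.ball x (γ * ε))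
    [Infinite Y] :
    ¬ Function.Injective g ∧ ∀ h : Y ≃ₜ Y, ⇑h ≠ g :=
  not_injective_of_infinite_general g hgc hgs β γ K hβ hK hγ0 hγ1 hax1
end
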